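/- arXiv:2208.06477 — 2 statements merged into one kernel-verified Lean document; each statement's English description precedes it below -/
import Mathlib

section
/- Consider a solution of the internal wave problem such that the velocity fields 𝐮₁ and 𝐮₂ are bounded on their layers and the vorticity of the upper layer is the constant nonzero horizontal vector ω₂ = ∇×𝐮₂ = (0, β₂, 0) with β₂ ≠ 0. Then in Ω₂: the velocity 𝐮₂ and the pressure P₂ are independent of y (that is, 𝐮₂(x,y₁,z) = 𝐮₂(x,y₂,z) and P₂(x,y₁,z) = P₂(x,y₂,z) whenever both points lie in Ω₂), and the second velocity component v₂ is constant throughout Ω₂. -/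
noncomputable section

open Set

/-- Partial derivative in the `x`-direction of a function on `ℝ × ℝ × ℝ`. -/
def pdx (f : ℝ × ℝ × ℝ → ℝ) (p : ℝ × ℝ × ℝ) : ℝ := fderiv ℝ f p (1, 0, 0)

/-- Partial derivative in the `y`-direction of a function on `ℝ × ℝ × ℝ`. -/
def pdy (f : ℝ × ℝ × ℝ → ℝ) (p : ℝ × ℝ × ℝ) : ℝ := fderiv ℝ f p (0, 1, 0)

/-- Partial derivative in the `z`-direction of a function on `ℝ × ℝ × ℝ`. -/
def pdz (f : ℝ × ℝ × ℝ → ℝ) (p : ℝ × ℝ × ℝ) : ℝ := fderiv ℝ f p (0, 0, 1)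

/-- The curl `∇ × (u,v,w)` of a vector field on `ℝ³`. -/
def curl3 (u v w : ℝ × ℝ × ℝ → ℝ) (p : ℝ × ℝ × ℝ) : ℝ × ℝ × ℝ :=
  (pdy w p - pdz v p, pdz u p - pdx w p, pdx v p - pdy u p)

/-- The lower fluid layer `Ω₁ = {(x,y,z) : -h₁ < z < η(x,y)}`. -/
def layer1 (h₁ : ℝ) (η : ℝ × ℝ → ℝ) : Set (ℝ × ℝ × ℝ) :=
  {p | -h₁ < p.2.2 ∧ p.2.2 < η (p.1, p.2.1)}

/-- The upper fluid layer `Ω₂ = {(x,y,z) : η(x,y) < z < h₂}`. -/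
def layer2 (h₂ : ℝ) (η : ℝ × ℝ → ℝ) : Set (ℝ × ℝ × ℝ) :=
  {p | η (p.1, p.2.1) < p.2.2 ∧ p.2.2 < h₂}

/-- A (classical) solution of the steady internal gravity wave problem for two
superposed constant-density fluids in a channel `-h₁ < z < h₂`, with interface
`z = η(x,y)`, velocities `𝐮ᵢ = (uᵢ, vᵢ, wᵢ)` and pressures `Pᵢ`. -/
structure InternalWaveSolution (h₁ h₂ g ρ₁ ρ₂ : ℝ) (η : ℝ × ℝ → ℝ)
    (u₁ v₁ w₁ P₁ u₂ v₂ w₂ P₂ : ℝ × ℝ × ℝ → ℝ) : Prop where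
  h₁_pos : 0 < h₁
  h₂_pos : 0 < h₂
  g_pos : 0 < g
  ρ₁_pos : 0 < ρ₁
  ρ₂_pos : 0 < ρ₂
  η_C1 : ContDiff ℝ 1 η
  η_inf : ∃ a : ℝ, -h₁ < a ∧ ∀ q : ℝ × ℝ, a ≤ η q
  η_sup : ∃ b : ℝ, b < h₂ ∧ ∀ q : ℝ × ℝ, η q ≤ b
  u₁_cont : ContinuousOn u₁ (closure (layer1 h₁ η))
  v₁_cont : ContinuousOn v₁ (closure (layer1 h₁ η))
  w₁_cont : ContinuousOn w₁ (closure (layer1 h₁ η))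
  P₁_cont : ContinuousOn P₁ (closure (layer1 h₁ η))
  u₁_C2 : ContDiffOn ℝ 2 u₁ (layer1 h₁ η)
  v₁_C2 : ContDiffOn ℝ 2 v₁ (layer1 h₁ η)
  w₁_C2 : ContDiffOn ℝ 2 w₁ (layer1 h₁ η)
  P₁_C2 : ContDiffOn ℝ 2 P₁ (layer1 h₁ η)
  u₂_cont : ContinuousOn u₂ (closure (layer2 h₂ η))
  v₂_cont : ContinuousOn v₂ (closure (layer2 h₂ η))
  w₂_cont : ContinuousOn w₂ (closure (layer2 h₂ η))
  P₂_cont : ContinuousOn P₂ (closure (layer2 h₂ η))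
  u₂_C2 : ContDiffOn ℝ 2 u₂ (layer2 h₂ η)
  v₂_C2 : ContDiffOn ℝ 2 v₂ (layer2 h₂ η)
  w₂_C2 : ContDiffOn ℝ 2 w₂ (layer2 h₂ η)
  P₂_C2 : ContDiffOn ℝ 2 P₂ (layer2 h₂ η)
  momentum₁_x : ∀ p ∈ layer1 h₁ η,
    ρ₁ * (u₁ p * pdx u₁ p + v₁ p * pdy u₁ p + w₁ p * pdz u₁ p) = -(pdx P₁ p)
  momentum₁_y : ∀ p ∈ layer1 h₁ η,
    ρ₁ * (u₁ p * pdx v₁ p + v₁ p * pdy v₁ p + w₁ p * pdz v₁ p) = -(pdy P₁ p)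
  momentum₁_z : ∀ p ∈ layer1 h₁ η,
    ρ₁ * (u₁ p * pdx w₁ p + v₁ p * pdy w₁ p + w₁ p * pdz w₁ p) = -(pdz P₁ p) - ρ₁ * g
  momentum₂_x : ∀ p ∈ layer2 h₂ η,
    ρ₂ * (u₂ p * pdx u₂ p + v₂ p * pdy u₂ p + w₂ p * pdz u₂ p) = -(pdx P₂ p)
  momentum₂_y : ∀ p ∈ layer2 h₂ η,
    ρ₂ * (u₂ p * pdx v₂ p + v₂ p * pdy v₂ p + w₂ p * pdz v₂ p) = -(pdy P₂ p)
  momentum₂_z : ∀ p ∈ layer2 h₂ η,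
    ρ₂ * (u₂ p * pdx w₂ p + v₂ p * pdy w₂ p + w₂ p * pdz w₂ p) = -(pdz P₂ p) - ρ₂ * g
  incompressible₁ : ∀ p ∈ layer1 h₁ η, pdx u₁ p + pdy v₁ p + pdz w₁ p = 0
  incompressible₂ : ∀ p ∈ layer2 h₂ η, pdx u₂ p + pdy v₂ p + pdz w₂ p = 0
  kinematic₁ : ∀ x y : ℝ,
    u₁ (x, y, η (x, y)) * fderiv ℝ η (x, y) (1, 0)
      + v₁ (x, y, η (x, y)) * fderiv ℝ η (x, y) (0, 1) = w₁ (x, y, η (x, y))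
  kinematic₂ : ∀ x y : ℝ,
    u₂ (x, y, η (x, y)) * fderiv ℝ η (x, y) (1, 0)
      + v₂ (x, y, η (x, y)) * fderiv ℝ η (x, y) (0, 1) = w₂ (x, y, η (x, y))
  dynamic : ∀ x y : ℝ, P₁ (x, y, η (x, y)) = P₂ (x, y, η (x, y))
  bed : ∀ x y : ℝ, w₁ (x, y, -h₁) = 0
  lid : ∀ x y : ℝ, w₂ (x, y, h₂) = 0

/-- The velocity field `(u,v,w)` is (uniformly) bounded on the set `s`. -/
def BoundedVel (s : Set (ℝ × ℝ × ℝ)) (u v w : ℝ × ℝ × ℝ → ℝ) : Prop :=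
  ∃ C : ℝ, ∀ p ∈ s, |u p| ≤ C ∧ |v p| ≤ C ∧ |w p| ≤ C

/-!
Lamb's form of the steady Euler equations is `∇H = ρ 𝐮 × ω` for the Bernoulli function
`H = P + ρ|𝐮|²/2 + ρgz`; for `ω = (0, β, 0)` it reads `∇H = ρβ (-w, 0, u)`. Symmetry of the second
derivatives of `H` gives `∂_y u = ∂_y w = 0` and `∂_x u + ∂_z w = 0`, so `∂_y v = 0` by
incompressibility, and the curl gives `∂_x v = ∂_z v = 0`: `v` is constant on the connected layer.
In each plane `y = const` the complex velocity `(u - βz) - i w` is then holomorphic. Above `sup η`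
the layer contains whole lines in the `y`-direction, so the complex velocities of two such planes
agree there, hence everywhere by the identity theorem. Then `∇H` agrees on the two planes as well,
so `H`, and with it `P`, is independent of `y`.
-/

open Filter

lemma fderiv_apply_mk (f : ℝ × ℝ × ℝ → ℝ) (p : ℝ × ℝ × ℝ) (a b c : ℝ) :
    fderiv ℝ f p (a, b, c) = a * pdx f p + b * pdy f p + c * pdz f p := by
  have : ((a, b, c) : ℝ × ℝ × ℝ) = a • (1, 0, 0) + b • (0, 1, 0) + c • (0, 0, 1) := by
    simp
  rw [this, map_add, map_add, map_smul, map_smul, map_smul]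
  rfl

theorem fderiv_apply_comm_of_eqOn {E : Type*} [NormedAddCommGroup E] [NormedSpace ℝ E]
    {s : Set E} (hs : IsOpen s) {H F G : E → ℝ} (hH : ContDiffOn ℝ 2 H s) {d e : E}
    (hF : EqOn (fun q => fderiv ℝ H q d) F s) (hG : EqOn (fun q => fderiv ℝ H q e) G s)
    {p : E} (hp : p ∈ s) : fderiv ℝ F p e = fderiv ℝ G p d := by
  have hH₂ : ContDiffAt ℝ 2 H p := hH.contDiffAt (hs.mem_nhds hp)
  have hH' : DifferentiableAt ℝ (fderiv ℝ H) p :=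
    (hH₂.fderiv_right (m := 1) le_rfl).differentiableAt one_ne_zero
  rw [← (eventuallyEq_of_mem (hs.mem_nhds hp) hF).fderiv_eq,
    ← (eventuallyEq_of_mem (hs.mem_nhds hp) hG).fderiv_eq,
    fderiv_clm_apply hH' (differentiableAt_const d),
    fderiv_clm_apply hH' (differentiableAt_const e)]
  simpa using hH₂.isSymmSndFDerivAt (by simp) e d

/-- Every point is joined to the convex slab `b < ht < h` by a segment in the direction `e`. -/
theorem isPreconnected_setOf_lt_lt {E : Type*} [AddCommGroup E] [Module ℝ E] [TopologicalSpace E]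
    [IsTopologicalAddGroup E] [ContinuousSMul ℝ E] (ht : E →ₗ[ℝ] ℝ) {e : E} (he : ht e = 1)
    {Γ : E → ℝ} (hΓ : ∀ q (t : ℝ), Γ (q + t • e) = Γ q) {b h : ℝ} (hΓb : ∀ q, Γ q ≤ b)
    (hbh : b < h) : IsPreconnected {q | Γ q < ht q ∧ ht q < h} := by
  obtain ⟨c, hbc, hch⟩ := exists_between hbh
  have hT : Convex ℝ (ht ⁻¹' Ioo b h) := (convex_Ioo b h).linear_preimage ht
  have hTmem : ∀ q, ht q = c → q ∈ ht ⁻¹' Ioo b h := fun q hq => by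
    simpa only [mem_preimage, hq] using ⟨hbc, hch⟩
  refine isPreconnected_of_forall (c • e) fun p hp => ?_
  have hseg : segment ℝ p (p + (c - ht p) • e) ⊆ {q | Γ q < ht q ∧ ht q < h} := by
    rw [segment_eq_image']
    rintro _ ⟨θ, ⟨hθ₀, hθ₁⟩, rfl⟩
    have hq : p + θ • (p + (c - ht p) • e - p) = p + (θ * (c - ht p)) • e := by
      rw [add_sub_cancel_left, smul_smul]
    simp only [hq, mem_ofPred_eq, hΓ, map_add, map_smul, he, smul_eq_mul, mul_one]
    have := hΓb p
    rcases le_total (ht p) c with hpc | hpc <;> constructor <;> nlinarith [hp.1, hp.2]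
  refine ⟨segment ℝ p (p + (c - ht p) • e) ∪ ht ⁻¹' Ioo b h, union_subset hseg ?_,
    Or.inr (hTmem _ (by simp [he])), Or.inl (left_mem_segment ℝ _ _), ?_⟩
  · exact fun q hq => ⟨(hΓb q).trans_lt hq.1, hq.2⟩
  · exact (convex_segment _ _).isPreconnected.union _ (right_mem_segment ℝ _ _)
      (hTmem _ (by simp [he])) hT.isPreconnected

open Complex in
theorem differentiableAt_complex_of_cauchyRiemann {a b : ℂ → ℝ} {A B : ℂ →L[ℝ] ℝ} {z : ℂ}
    (ha : HasFDerivAt a A z) (hb : HasFDerivAt b B z) (h₁ : A 1 = B I) (h₂ : A I = -B 1) :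
    DifferentiableAt ℂ (fun ζ => (a ζ : ℂ) + b ζ * I) z := by
  have hf := (ofRealCLM.hasFDerivAt.comp z ha).add
    ((ofRealCLM.hasFDerivAt.comp z hb).mul_const I)
  refine (hf.complexOfReal_hasFDerivAt ?_).differentiableAt
  apply Complex.ext <;> simp [h₁, h₂]

def xzSlice (y : ℝ) (ζ : ℂ) : ℝ × ℝ × ℝ := (ζ.re, y, ζ.im)

def xzEmbedding : ℂ →L[ℝ] ℝ × ℝ × ℝ := Complex.reCLM.prod ((0 : ℂ →L[ℝ] ℝ).prod Complex.imCLM)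

@[simp]
lemma xzEmbedding_apply (d : ℂ) : xzEmbedding d = (d.re, 0, d.im) := rfl

lemma hasFDerivAt_comp_xzSlice {f : ℝ × ℝ × ℝ → ℝ} {y : ℝ} {ζ : ℂ}
    (hf : DifferentiableAt ℝ f (xzSlice y ζ)) :
    HasFDerivAt (fun ζ => f (xzSlice y ζ)) ((fderiv ℝ f (xzSlice y ζ)).comp xzEmbedding) ζ :=
  hf.hasFDerivAt.comp ζ (Complex.reCLM.hasFDerivAt.prodMk
    ((hasFDerivAt_const y ζ).prodMk Complex.imCLM.hasFDerivAt))

lemma fderiv_comp_xzSlice_apply {f : ℝ × ℝ × ℝ → ℝ} {y : ℝ} {ζ : ℂ}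
    (hf : DifferentiableAt ℝ f (xzSlice y ζ)) (d : ℂ) :
    fderiv ℝ (fun ζ => f (xzSlice y ζ)) ζ d
      = d.re * pdx f (xzSlice y ζ) + d.im * pdz f (xzSlice y ζ) := by
  simp [(hasFDerivAt_comp_xzSlice hf).fderiv, fderiv_apply_mk]

/-- Removing the shear `β z` leaves a planar flow that is irrotational as well as divergence
free, which makes this complex velocity holomorphic. -/
def complexVelocity (β : ℝ) (u w : ℝ × ℝ × ℝ → ℝ) (y : ℝ) (ζ : ℂ) : ℂ :=
  ((u (xzSlice y ζ) - β * ζ.im : ℝ) : ℂ) + ((-w (xzSlice y ζ) : ℝ) : ℂ) * Complex.I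

lemma differentiableAt_complexVelocity {β y : ℝ} {u w : ℝ × ℝ × ℝ → ℝ} {ζ : ℂ}
    (hu : DifferentiableAt ℝ u (xzSlice y ζ)) (hw : DifferentiableAt ℝ w (xzSlice y ζ))
    (hdiv : pdx u (xzSlice y ζ) + pdz w (xzSlice y ζ) = 0)
    (hcurl : pdz u (xzSlice y ζ) - pdx w (xzSlice y ζ) = β) :
    DifferentiableAt ℂ (complexVelocity β u w y) ζ := by
  refine differentiableAt_complex_of_cauchyRiemann
    ((hasFDerivAt_comp_xzSlice hu).sub (Complex.imCLM.hasFDerivAt.const_mul β))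
    (hasFDerivAt_comp_xzSlice hw).neg ?_ ?_
  · simpa [fderiv_apply_mk] using eq_neg_of_add_eq_zero_left hdiv
  · simp [← hcurl, fderiv_apply_mk]

lemma complexVelocity_eq_iff {β y₁ y₂ : ℝ} {u w : ℝ × ℝ × ℝ → ℝ} {ζ : ℂ} :
    complexVelocity β u w y₁ ζ = complexVelocity β u w y₂ ζ ↔
      u (xzSlice y₁ ζ) = u (xzSlice y₂ ζ) ∧ w (xzSlice y₁ ζ) = w (xzSlice y₂ ζ) := by
  simp [complexVelocity, Complex.ext_iff]

def bernoulliFunction (ρ g : ℝ) (u v w P : ℝ × ℝ × ℝ → ℝ) (p : ℝ × ℝ × ℝ) : ℝ :=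
  P p + ρ / 2 * (u p ^ 2 + v p ^ 2 + w p ^ 2) + ρ * g * p.2.2

lemma fderiv_bernoulliFunction_apply {ρ g : ℝ} {u v w P : ℝ × ℝ × ℝ → ℝ} {p : ℝ × ℝ × ℝ}
    (hu : DifferentiableAt ℝ u p) (hv : DifferentiableAt ℝ v p) (hw : DifferentiableAt ℝ w p)
    (hP : DifferentiableAt ℝ P p) (d : ℝ × ℝ × ℝ) :
    fderiv ℝ (bernoulliFunction ρ g u v w P) p d = fderiv ℝ P p d
      + ρ * (u p * fderiv ℝ u p d + v p * fderiv ℝ v p d + w p * fderiv ℝ w p d)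
      + ρ * g * d.2.2 := by
  have hz : HasFDerivAt (fun q : ℝ × ℝ × ℝ => q.2.2)
      ((ContinuousLinearMap.snd ℝ ℝ ℝ).comp (ContinuousLinearMap.snd ℝ ℝ (ℝ × ℝ))) p :=
    ((ContinuousLinearMap.snd ℝ ℝ ℝ).comp (ContinuousLinearMap.snd ℝ ℝ (ℝ × ℝ))).hasFDerivAt
  have hH : HasFDerivAt (bernoulliFunction ρ g u v w P) _ p :=
    (hP.hasFDerivAt.add ((((hu.hasFDerivAt.pow 2).add (hv.hasFDerivAt.pow 2)).add
      (hw.hasFDerivAt.pow 2)).const_mul (ρ / 2))).add (hz.const_mul (ρ * g))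
  rw [hH.fderiv]
  simp only [Nat.add_one_sub_one, pow_one, nsmul_eq_mul, Nat.cast_ofNat, smul_add, add_apply,
    smul_apply, smul_eq_mul, ContinuousLinearMap.comp_apply, ContinuousLinearMap.coe_snd']
  ring

structure SteadyEulerFlow (ρ g : ℝ) (s : Set (ℝ × ℝ × ℝ)) (u v w P : ℝ × ℝ × ℝ → ℝ) : Prop where
  isOpen : IsOpen s
  u_C2 : ContDiffOn ℝ 2 u s
  v_C2 : ContDiffOn ℝ 2 v s
  w_C2 : ContDiffOn ℝ 2 w s
  P_C2 : ContDiffOn ℝ 2 P s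
  momentum_x : ∀ p ∈ s,
    ρ * (u p * pdx u p + v p * pdy u p + w p * pdz u p) = -(pdx P p)
  momentum_y : ∀ p ∈ s,
    ρ * (u p * pdx v p + v p * pdy v p + w p * pdz v p) = -(pdy P p)
  momentum_z : ∀ p ∈ s,
    ρ * (u p * pdx w p + v p * pdy w p + w p * pdz w p) = -(pdz P p) - ρ * g
  incompressible : ∀ p ∈ s, pdx u p + pdy v p + pdz w p = 0

namespace SteadyEulerFlow

variable {ρ g β : ℝ} {s : Set (ℝ × ℝ × ℝ)} {u v w P : ℝ × ℝ × ℝ → ℝ} {p : ℝ × ℝ × ℝ}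

lemma differentiableAt_u (hF : SteadyEulerFlow ρ g s u v w P) (hp : p ∈ s) :
    DifferentiableAt ℝ u p :=
  (hF.u_C2.differentiableOn two_ne_zero).differentiableAt (hF.isOpen.mem_nhds hp)

lemma differentiableAt_v (hF : SteadyEulerFlow ρ g s u v w P) (hp : p ∈ s) :
    DifferentiableAt ℝ v p :=
  (hF.v_C2.differentiableOn two_ne_zero).differentiableAt (hF.isOpen.mem_nhds hp)

lemma differentiableAt_w (hF : SteadyEulerFlow ρ g s u v w P) (hp : p ∈ s) :
    DifferentiableAt ℝ w p :=
  (hF.w_C2.differentiableOn two_ne_zero).differentiableAt (hF.isOpen.mem_nhds hp)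

lemma differentiableAt_P (hF : SteadyEulerFlow ρ g s u v w P) (hp : p ∈ s) :
    DifferentiableAt ℝ P p :=
  (hF.P_C2.differentiableOn two_ne_zero).differentiableAt (hF.isOpen.mem_nhds hp)

lemma contDiffOn_bernoulliFunction (hF : SteadyEulerFlow ρ g s u v w P) :
    ContDiffOn ℝ 2 (bernoulliFunction ρ g u v w P) s := by
  have hz : ContDiffOn ℝ 2 (fun q : ℝ × ℝ × ℝ => q.2.2) s := by fun_prop
  exact (hF.P_C2.add ((((hF.u_C2.pow 2).add (hF.v_C2.pow 2)).add (hF.w_C2.pow 2)).const_smul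
    (ρ / 2))).add (hz.const_smul (ρ * g))

theorem pd_bernoulliFunction_eq_cross_curl (hF : SteadyEulerFlow ρ g s u v w P) (hp : p ∈ s)
    {ω₁ ω₂ ω₃ : ℝ} (hω : curl3 u v w p = (ω₁, ω₂, ω₃)) :
    pdx (bernoulliFunction ρ g u v w P) p = ρ * (v p * ω₃ - w p * ω₂) ∧
    pdy (bernoulliFunction ρ g u v w P) p = ρ * (w p * ω₁ - u p * ω₃) ∧
    pdz (bernoulliFunction ρ g u v w P) p = ρ * (u p * ω₂ - v p * ω₁) := by
  simp only [curl3, Prod.mk.injEq] at hω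
  obtain ⟨h₁, h₂, h₃⟩ := hω
  have hH := fderiv_bernoulliFunction_apply (ρ := ρ) (g := g) (hF.differentiableAt_u hp)
    (hF.differentiableAt_v hp) (hF.differentiableAt_w hp) (hF.differentiableAt_P hp)
  have hx := hF.momentum_x p hp
  have hy := hF.momentum_y p hp
  have hz := hF.momentum_z p hp
  simp only [pdx, pdy, pdz, hH] at hx hy hz h₁ h₂ h₃ ⊢
  refine ⟨?_, ?_, ?_⟩
  · linear_combination hx + ρ * v p * h₃ - ρ * w p * h₂
  · linear_combination hy + ρ * w p * h₁ - ρ * u p * h₃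
  · linear_combination hz + ρ * u p * h₂ - ρ * v p * h₁

lemma pdx_bernoulliFunction (hF : SteadyEulerFlow ρ g s u v w P)
    (hω : ∀ q ∈ s, curl3 u v w q = (0, β, 0)) :
    EqOn (pdx (bernoulliFunction ρ g u v w P)) (fun q => -(ρ * β) * w q) s := fun q hq => by
  rw [(hF.pd_bernoulliFunction_eq_cross_curl hq (hω q hq)).1]
  ring

lemma pdy_bernoulliFunction (hF : SteadyEulerFlow ρ g s u v w P)
    (hω : ∀ q ∈ s, curl3 u v w q = (0, β, 0)) :
    EqOn (pdy (bernoulliFunction ρ g u v w P)) (fun _ => 0) s := fun q hq => by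
  rw [(hF.pd_bernoulliFunction_eq_cross_curl hq (hω q hq)).2.1]
  ring

lemma pdz_bernoulliFunction (hF : SteadyEulerFlow ρ g s u v w P)
    (hω : ∀ q ∈ s, curl3 u v w q = (0, β, 0)) :
    EqOn (pdz (bernoulliFunction ρ g u v w P)) (fun q => ρ * β * u q) s := fun q hq => by
  rw [(hF.pd_bernoulliFunction_eq_cross_curl hq (hω q hq)).2.2]
  ring

lemma pdy_u_eq_zero (hF : SteadyEulerFlow ρ g s u v w P) (hρ : ρ ≠ 0) (hβ : β ≠ 0)
    (hω : ∀ q ∈ s, curl3 u v w q = (0, β, 0)) (hp : p ∈ s) : pdy u p = 0 := by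
  have h := fderiv_apply_comm_of_eqOn hF.isOpen hF.contDiffOn_bernoulliFunction
    (hF.pdz_bernoulliFunction hω) (hF.pdy_bernoulliFunction hω) hp
  rw [fderiv_const_mul (hF.differentiableAt_u hp)] at h
  simpa [pdy, hρ, hβ] using h

lemma pdy_w_eq_zero (hF : SteadyEulerFlow ρ g s u v w P) (hρ : ρ ≠ 0) (hβ : β ≠ 0)
    (hω : ∀ q ∈ s, curl3 u v w q = (0, β, 0)) (hp : p ∈ s) : pdy w p = 0 := by
  have h := fderiv_apply_comm_of_eqOn hF.isOpen hF.contDiffOn_bernoulliFunction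
    (hF.pdx_bernoulliFunction hω) (hF.pdy_bernoulliFunction hω) hp
  rw [fderiv_const_mul (hF.differentiableAt_w hp)] at h
  simpa [pdy, hρ, hβ] using h

lemma pdx_u_add_pdz_w_eq_zero (hF : SteadyEulerFlow ρ g s u v w P) (hρ : ρ ≠ 0) (hβ : β ≠ 0)
    (hω : ∀ q ∈ s, curl3 u v w q = (0, β, 0)) (hp : p ∈ s) : pdx u p + pdz w p = 0 := by
  have h := fderiv_apply_comm_of_eqOn hF.isOpen hF.contDiffOn_bernoulliFunction
    (hF.pdx_bernoulliFunction hω) (hF.pdz_bernoulliFunction hω) hp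
  rw [fderiv_const_mul (hF.differentiableAt_w hp), fderiv_const_mul (hF.differentiableAt_u hp)] at h
  simp only [smul_apply, smul_eq_mul] at h
  have h' : ρ * β * (pdx u p + pdz w p) = 0 := by
    simp only [pdx, pdz]
    linear_combination -h
  simpa [hρ, hβ] using h'

lemma fderiv_v_eq_zero (hF : SteadyEulerFlow ρ g s u v w P) (hρ : ρ ≠ 0) (hβ : β ≠ 0)
    (hω : ∀ q ∈ s, curl3 u v w q = (0, β, 0)) (hp : p ∈ s) : fderiv ℝ v p = 0 := by
  have hcurl := hω p hp
  simp only [curl3, Prod.mk.injEq] at hcurl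
  have hvx : pdx v p = 0 := by linarith [hF.pdy_u_eq_zero hρ hβ hω hp]
  have hvz : pdz v p = 0 := by linarith [hF.pdy_w_eq_zero hρ hβ hω hp]
  have hvy : pdy v p = 0 := by
    linarith [hF.incompressible p hp, hF.pdx_u_add_pdz_w_eq_zero hρ hβ hω hp]
  exact ContinuousLinearMap.ext fun ⟨a, b, c⟩ => by simp [fderiv_apply_mk, hvx, hvy, hvz]

lemma differentiableOn_complexVelocity (hF : SteadyEulerFlow ρ g s u v w P) (hρ : ρ ≠ 0)
    (hβ : β ≠ 0) (hω : ∀ q ∈ s, curl3 u v w q = (0, β, 0)) (y : ℝ) :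
    DifferentiableOn ℂ (complexVelocity β u w y) {ζ | xzSlice y ζ ∈ s} := fun ζ hζ => by
  have hcurl := hω _ hζ
  simp only [curl3, Prod.mk.injEq] at hcurl
  exact (differentiableAt_complexVelocity (hF.differentiableAt_u hζ) (hF.differentiableAt_w hζ)
    (hF.pdx_u_add_pdz_w_eq_zero hρ hβ hω hζ) hcurl.2.1).differentiableWithinAt

lemma eqOn_bernoulliFunction_xzSlice (hF : SteadyEulerFlow ρ g s u v w P)
    (hω : ∀ q ∈ s, curl3 u v w q = (0, β, 0)) {y₁ y₂ : ℝ} {S : Set ℂ} (hS : IsOpen S)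
    (hS' : IsPreconnected S) (hSs : ∀ ζ ∈ S, xzSlice y₁ ζ ∈ s ∧ xzSlice y₂ ζ ∈ s)
    (huw : ∀ ζ ∈ S, u (xzSlice y₁ ζ) = u (xzSlice y₂ ζ) ∧ w (xzSlice y₁ ζ) = w (xzSlice y₂ ζ))
    {ζ₀ : ℂ} (hζ₀ : ζ₀ ∈ S)
    (h₀ : bernoulliFunction ρ g u v w P (xzSlice y₁ ζ₀)
      = bernoulliFunction ρ g u v w P (xzSlice y₂ ζ₀)) :
    EqOn (fun ζ => bernoulliFunction ρ g u v w P (xzSlice y₁ ζ))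
      (fun ζ => bernoulliFunction ρ g u v w P (xzSlice y₂ ζ)) S := by
  have hH : ∀ p ∈ s, DifferentiableAt ℝ (bernoulliFunction ρ g u v w P) p := fun p hp =>
    (hF.contDiffOn_bernoulliFunction.differentiableOn two_ne_zero).differentiableAt
      (hF.isOpen.mem_nhds hp)
  refine hS.eqOn_of_fderiv_eq hS'
    (fun ζ hζ => (hasFDerivAt_comp_xzSlice (hH _ (hSs ζ hζ).1)).differentiableAt
      |>.differentiableWithinAt)
    (fun ζ hζ => (hasFDerivAt_comp_xzSlice (hH _ (hSs ζ hζ).2)).differentiableAt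
      |>.differentiableWithinAt)
    (fun ζ hζ => ContinuousLinearMap.ext fun d => ?_) hζ₀ h₀
  obtain ⟨hs₁, hs₂⟩ := hSs ζ hζ
  rw [fderiv_comp_xzSlice_apply (hH _ hs₁), fderiv_comp_xzSlice_apply (hH _ hs₂),
    hF.pdx_bernoulliFunction hω hs₁, hF.pdx_bernoulliFunction hω hs₂,
    hF.pdz_bernoulliFunction hω hs₁, hF.pdz_bernoulliFunction hω hs₂]
  simp only [(huw ζ hζ).1, (huw ζ hζ).2]

end SteadyEulerFlow

section UpperLayer

variable {h₂ b : ℝ} {η : ℝ × ℝ → ℝ}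

lemma isOpen_layer2 (hη : Continuous η) : IsOpen (layer2 h₂ η) :=
  (isOpen_lt (hη.comp (continuous_fst.prodMk continuous_snd.fst)) continuous_snd.snd).inter
    (isOpen_lt continuous_snd.snd continuous_const)

lemma isPreconnected_layer2 (hb : ∀ q, η q ≤ b) (hbh : b < h₂) :
    IsPreconnected (layer2 h₂ η) :=
  isPreconnected_setOf_lt_lt ((LinearMap.snd ℝ ℝ ℝ).comp (LinearMap.snd ℝ ℝ (ℝ × ℝ)))
    (e := (0, 0, 1)) (by simp) (Γ := fun q => η (q.1, q.2.1)) (fun q t => by simp)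
    (fun q => hb _) hbh

lemma isPreconnected_setOf_xzSlice_mem_layer2 (hb : ∀ q, η q ≤ b) (hbh : b < h₂) (y₁ y₂ : ℝ) :
    IsPreconnected {ζ : ℂ | xzSlice y₁ ζ ∈ layer2 h₂ η ∧ xzSlice y₂ ζ ∈ layer2 h₂ η} := by
  convert isPreconnected_setOf_lt_lt Complex.imLm (e := Complex.I) (by simp)
    (Γ := fun ζ => max (η (ζ.re, y₁)) (η (ζ.re, y₂))) (fun ζ t => by simp)
    (fun ζ => max_le (hb _) (hb _)) hbh using 1
  ext ζ
  simp only [xzSlice, layer2, mem_ofPred_eq, max_lt_iff, Complex.imLm_coe]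
  tauto

lemma apply_eq_of_pdy_eq_zero {f : ℝ × ℝ × ℝ → ℝ} {x z : ℝ}
    (hf : ∀ y, DifferentiableAt ℝ f (x, y, z)) (h0 : ∀ y, pdy f (x, y, z) = 0) (y₁ y₂ : ℝ) :
    f (x, y₁, z) = f (x, y₂, z) := by
  have hd : ∀ y, HasDerivAt (fun y => f (x, y, z)) 0 y := fun y => by
    have := (hf y).hasFDerivAt.comp_hasDerivAt y
      ((hasDerivAt_const y x).prodMk ((hasDerivAt_id y).prodMk (hasDerivAt_const y z)))
    exact h0 y ▸ this
  exact is_const_of_deriv_eq_zero (fun y => (hd y).differentiableAt) (fun y => (hd y).deriv) y₁ y₂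

lemma layer2_apply_eq_of_pdy_eq_zero (hb : ∀ q, η q ≤ b) {f : ℝ × ℝ × ℝ → ℝ}
    (hf : ∀ p ∈ layer2 h₂ η, DifferentiableAt ℝ f p) (h0 : ∀ p ∈ layer2 h₂ η, pdy f p = 0)
    {x z : ℝ} (hbz : b < z) (hz : z < h₂) (y₁ y₂ : ℝ) : f (x, y₁, z) = f (x, y₂, z) :=
  have hmem : ∀ y, (x, y, z) ∈ layer2 h₂ η := fun _ => ⟨(hb _).trans_lt hbz, hz⟩
  apply_eq_of_pdy_eq_zero (fun y => hf _ (hmem y)) (fun y => h0 _ (hmem y)) y₁ y₂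

end UpperLayer

theorem SteadyEulerFlow.apply_xzSlice_eq_of_mem_layer2 {ρ g β h₂ b : ℝ} {η : ℝ × ℝ → ℝ}
    {u v w P : ℝ × ℝ × ℝ → ℝ} (hF : SteadyEulerFlow ρ g (layer2 h₂ η) u v w P)
    (hη : Continuous η) (hb : ∀ q, η q ≤ b) (hbh : b < h₂) (hρ : ρ ≠ 0) (hβ : β ≠ 0)
    (hω : ∀ q ∈ layer2 h₂ η, curl3 u v w q = (0, β, 0)) {y₁ y₂ : ℝ} {ζ : ℂ}
    (hζ₁ : xzSlice y₁ ζ ∈ layer2 h₂ η) (hζ₂ : xzSlice y₂ ζ ∈ layer2 h₂ η) :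
    u (xzSlice y₁ ζ) = u (xzSlice y₂ ζ) ∧ w (xzSlice y₁ ζ) = w (xzSlice y₂ ζ) ∧
      bernoulliFunction ρ g u v w P (xzSlice y₁ ζ)
        = bernoulliFunction ρ g u v w P (xzSlice y₂ ζ) := by
  set S := {ζ : ℂ | xzSlice y₁ ζ ∈ layer2 h₂ η ∧ xzSlice y₂ ζ ∈ layer2 h₂ η}
  have hslice : ∀ y, Continuous (xzSlice y) := fun y =>
    Complex.continuous_re.prodMk (continuous_const.prodMk Complex.continuous_im)
  have hS : IsOpen S :=
    ((isOpen_layer2 hη).preimage (hslice y₁)).inter ((isOpen_layer2 hη).preimage (hslice y₂))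
  have hS' := isPreconnected_setOf_xzSlice_mem_layer2 hb hbh y₁ y₂
  have hband : IsOpen {ζ : ℂ | b < ζ.im ∧ ζ.im < h₂} :=
    (isOpen_lt continuous_const Complex.continuous_im).inter
      (isOpen_lt Complex.continuous_im continuous_const)
  have htop : ∀ f, (∀ p ∈ layer2 h₂ η, DifferentiableAt ℝ f p) →
      (∀ p ∈ layer2 h₂ η, pdy f p = 0) →
      ∀ ζ ∈ {ζ : ℂ | b < ζ.im ∧ ζ.im < h₂}, f (xzSlice y₁ ζ) = f (xzSlice y₂ ζ) :=
    fun f hf h0 ζ hζ => layer2_apply_eq_of_pdy_eq_zero hb hf h0 hζ.1 hζ.2 y₁ y₂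
  obtain ⟨c, hbc, hch⟩ := exists_between hbh
  have hc : (⟨0, c⟩ : ℂ) ∈ S := ⟨⟨(hb _).trans_lt hbc, hch⟩, ⟨(hb _).trans_lt hbc, hch⟩⟩
  have hcv : EqOn (complexVelocity β u w y₁) (complexVelocity β u w y₂) S := by
    refine (((hF.differentiableOn_complexVelocity hρ hβ hω y₁).mono fun ζ h => h.1).analyticOnNhd
      hS).eqOn_of_preconnected_of_eventuallyEq
      (((hF.differentiableOn_complexVelocity hρ hβ hω y₂).mono fun ζ h => h.2).analyticOnNhd hS)
      hS' hc ?_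
    filter_upwards [hband.mem_nhds ⟨hbc, hch⟩] with ζ hζ
    exact complexVelocity_eq_iff.2
      ⟨htop u (fun _ => hF.differentiableAt_u) (fun _ => hF.pdy_u_eq_zero hρ hβ hω) ζ hζ,
        htop w (fun _ => hF.differentiableAt_w) (fun _ => hF.pdy_w_eq_zero hρ hβ hω) ζ hζ⟩
  have huw : ∀ ζ ∈ S, u (xzSlice y₁ ζ) = u (xzSlice y₂ ζ) ∧ w (xzSlice y₁ ζ) = w (xzSlice y₂ ζ) :=
    fun ζ hζ => complexVelocity_eq_iff.1 (hcv hζ)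
  have hH := hF.eqOn_bernoulliFunction_xzSlice hω hS hS' (fun ζ hζ => hζ) huw hc
    (htop _ (fun p hp => (hF.contDiffOn_bernoulliFunction.differentiableOn two_ne_zero
      ).differentiableAt (hF.isOpen.mem_nhds hp)) (hF.pdy_bernoulliFunction hω) _ ⟨hbc, hch⟩)
  exact ⟨(huw ζ ⟨hζ₁, hζ₂⟩).1, (huw ζ ⟨hζ₁, hζ₂⟩).2, hH ⟨hζ₁, hζ₂⟩⟩

lemma InternalWaveSolution.steadyEulerFlow_upper {h₁ h₂ g ρ₁ ρ₂ : ℝ} {η : ℝ × ℝ → ℝ}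
    {u₁ v₁ w₁ P₁ u₂ v₂ w₂ P₂ : ℝ × ℝ × ℝ → ℝ}
    (sol : InternalWaveSolution h₁ h₂ g ρ₁ ρ₂ η u₁ v₁ w₁ P₁ u₂ v₂ w₂ P₂) :
    SteadyEulerFlow ρ₂ g (layer2 h₂ η) u₂ v₂ w₂ P₂ :=
  ⟨isOpen_layer2 sol.η_C1.continuous, sol.u₂_C2, sol.v₂_C2, sol.w₂_C2, sol.P₂_C2,
    sol.momentum₂_x, sol.momentum₂_y, sol.momentum₂_z, sol.incompressible₂⟩

theorem upper_layer_y_independent_general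
    (h₁ h₂ g ρ₁ ρ₂ : ℝ) (η : ℝ × ℝ → ℝ)
    (u₁ v₁ w₁ P₁ u₂ v₂ w₂ P₂ : ℝ × ℝ × ℝ → ℝ)
    (sol : InternalWaveSolution h₁ h₂ g ρ₁ ρ₂ η u₁ v₁ w₁ P₁ u₂ v₂ w₂ P₂)
    (β₂ : ℝ) (hβ₂ : β₂ ≠ 0)
    (hω₂ : ∀ p ∈ layer2 h₂ η, curl3 u₂ v₂ w₂ p = ((0 : ℝ), β₂, (0 : ℝ))) :
    (∀ x y₁ y₂ z : ℝ, (x, y₁, z) ∈ layer2 h₂ η → (x, y₂, z) ∈ layer2 h₂ η →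
      u₂ (x, y₁, z) = u₂ (x, y₂, z) ∧ v₂ (x, y₁, z) = v₂ (x, y₂, z) ∧
      w₂ (x, y₁, z) = w₂ (x, y₂, z) ∧ P₂ (x, y₁, z) = P₂ (x, y₂, z)) ∧
    (∃ V : ℝ, ∀ p ∈ layer2 h₂ η, v₂ p = V) := by
  obtain ⟨b, hbh₂, hb⟩ := sol.η_sup
  have hF := sol.steadyEulerFlow_upper
  have hρ := sol.ρ₂_pos.ne'
  obtain ⟨V, hV⟩ := hF.isOpen.exists_is_const_of_fderiv_eq_zero (isPreconnected_layer2 hb hbh₂)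
    (hF.v_C2.differentiableOn two_ne_zero) fun p hp => hF.fderiv_v_eq_zero hρ hβ₂ hω₂ hp
  refine ⟨fun x y₁ y₂ z h₁ h₂ => ?_, V, hV⟩
  obtain ⟨hu, hw, hH⟩ := hF.apply_xzSlice_eq_of_mem_layer2 sol.η_C1.continuous hb hbh₂ hρ hβ₂ hω₂
    (ζ := ⟨x, z⟩) h₁ h₂
  have hv : v₂ (x, y₁, z) = v₂ (x, y₂, z) := (hV _ h₁).trans (hV _ h₂).symm
  refine ⟨hu, hv, hw, ?_⟩
  simp only [bernoulliFunction, xzSlice] at hH hu hw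
  rw [hu, hv, hw] at hH
  linarith

/-- **Lemma (upper layer).** If the vorticity of the upper layer is the constant nonzero
horizontal vector `ω₂ = (0, β₂, 0)`, then `𝐮₂` and `P₂` are independent of `y` in `Ω₂`,
and `v₂` is constant throughout `Ω₂`. -/
theorem upper_layer_y_independent
    (h₁ h₂ g ρ₁ ρ₂ : ℝ) (η : ℝ × ℝ → ℝ)
    (u₁ v₁ w₁ P₁ u₂ v₂ w₂ P₂ : ℝ × ℝ × ℝ → ℝ)
    (sol : InternalWaveSolution h₁ h₂ g ρ₁ ρ₂ η u₁ v₁ w₁ P₁ u₂ v₂ w₂ P₂)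
    (hb₁ : BoundedVel (layer1 h₁ η) u₁ v₁ w₁)
    (hb₂ : BoundedVel (layer2 h₂ η) u₂ v₂ w₂)
    (β₂ : ℝ) (hβ₂ : β₂ ≠ 0)
    (hω₂ : ∀ p ∈ layer2 h₂ η, curl3 u₂ v₂ w₂ p = ((0 : ℝ), β₂, (0 : ℝ))) :
    (∀ x y₁ y₂ z : ℝ, (x, y₁, z) ∈ layer2 h₂ η → (x, y₂, z) ∈ layer2 h₂ η →
      u₂ (x, y₁, z) = u₂ (x, y₂, z) ∧ v₂ (x, y₁, z) = v₂ (x, y₂, z) ∧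
      w₂ (x, y₁, z) = w₂ (x, y₂, z) ∧ P₂ (x, y₁, z) = P₂ (x, y₂, z)) ∧
    (∃ V : ℝ, ∀ p ∈ layer2 h₂ η, v₂ p = V) :=
  upper_layer_y_independent_general h₁ h₂ g ρ₁ ρ₂ η u₁ v₁ w₁ P₁ u₂ v₂ w₂ P₂ sol β₂ hβ₂ hω₂
end
end

section
/- Let β ≠ 0, k ∈ ℝ, and let η ∈ C¹(ℝ²;ℝ) satisfy (β η(x,y) + k) ∂ₓη(x,y) = 0 for all (x,y) ∈ ℝ². Then ∂ₓη ≡ 0; that is, for each fixed y the function x ↦ η(x,y) is constant. -/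
noncomputable section

/-- Partial derivative in the first-coordinate direction of a function on `ℝ × ℝ`. -/
def pdx2 (f : ℝ × ℝ → ℝ) (q : ℝ × ℝ) : ℝ := fderiv ℝ f q (1, 0)

/-- Partial derivative in the second-coordinate direction of a function on `ℝ × ℝ`. -/
def pdy2 (f : ℝ × ℝ → ℝ) (q : ℝ × ℝ) : ℝ := fderiv ℝ f q (0, 1)

open Filter Topology

/- Where the derivative is nonzero it stays nonzero nearby, so there the function is locally
the constant `c`, whose derivative vanishes. -/
theorem HasDerivAt.eq_zero_of_eventually_eq_or_eq_zero {𝕜 F : Type*} [NontriviallyNormedField 𝕜]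
    [NormedAddCommGroup F] [NormedSpace 𝕜 F] {f f' : 𝕜 → F} {x : 𝕜} {c : F}
    (hf : HasDerivAt f (f' x) x) (hf' : ContinuousAt f' x)
    (h : ∀ᶠ y in 𝓝 x, f y = c ∨ f' y = 0) : f' x = 0 := by
  by_contra hne
  have hconst : f =ᶠ[𝓝 x] fun _ => c := by
    filter_upwards [h, hf'.eventually_ne hne] with y hy hy' using hy.resolve_right hy'
  exact hne (hf.unique ((hasDerivAt_const x c).congr_of_eventuallyEq hconst))

theorem hasDerivAt_pdx2 {f : ℝ × ℝ → ℝ} {x y : ℝ} (hf : DifferentiableAt ℝ f (x, y)) :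
    HasDerivAt (fun x => f (x, y)) (pdx2 f (x, y)) x :=
  hf.hasFDerivAt.comp_hasDerivAt x ((hasDerivAt_id x).prodMk (hasDerivAt_const x y))

theorem continuous_pdx2 {f : ℝ × ℝ → ℝ} (hf : ContDiff ℝ 1 f) : Continuous (pdx2 f) :=
  (hf.continuous_fderiv one_ne_zero).clm_apply continuous_const

/-- If `β ≠ 0` and `η ∈ C¹(ℝ²)` satisfies `(β η + k) ∂ₓη = 0` everywhere, then
`∂ₓη ≡ 0`; that is, for each fixed `y` the function `x ↦ η(x,y)` is constant. -/
theorem degenerate_transport_x_constant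
    (β k : ℝ) (hβ : β ≠ 0)
    (η : ℝ × ℝ → ℝ) (hη : ContDiff ℝ 1 η)
    (heq : ∀ q : ℝ × ℝ, (β * η q + k) * pdx2 η q = 0) :
    (∀ q : ℝ × ℝ, pdx2 η q = 0) ∧ (∀ x₁ x₂ y : ℝ, η (x₁, y) = η (x₂, y)) := by
  have hslice (x y : ℝ) : HasDerivAt (fun x => η (x, y)) (pdx2 η (x, y)) x :=
    hasDerivAt_pdx2 (hη.differentiable one_ne_zero _)
  have hdichotomy (q : ℝ × ℝ) : η q = -k / β ∨ pdx2 η q = 0 := by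
    refine (mul_eq_zero.mp (heq q)).imp_left fun h => ?_
    rw [eq_div_iff hβ]
    linarith
  have hzero : ∀ q : ℝ × ℝ, pdx2 η q = 0 := by
    rintro ⟨x, y⟩
    exact (hslice x y).eq_zero_of_eventually_eq_or_eq_zero (f' := fun x => pdx2 η (x, y))
      ((continuous_pdx2 hη).comp (.prodMk_left y)).continuousAt
      (.of_forall fun x => hdichotomy (x, y))
  refine ⟨hzero, fun x₁ x₂ y => ?_⟩
  refine is_const_of_deriv_eq_zero (fun x => (hslice x y).differentiableAt) (fun x => ?_) x₁ x₂
  rw [(hslice x y).deriv, hzero]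
end
end
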